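/- For any unit vector φ that is a product φ_A ⊗ φ_B, where φ_A involves the qudit together with the first n qubits (n ≤ k-1) and φ_B the remaining d-n qubits, the overlap with ψ = Σᵢ cᵢ|i⟩⊗|underline(2^{d-i})⟩ (with |c₁| ≥ ... ≥ |c_d|) satisfies |⟨φ,ψ⟩|² ≤ Σ_{i=1}^{k-1} |cᵢ|². -/

import Mathlib

/-!
Only the coefficients `φ (i, e_i) = a_i b_i` meet `ψ`, so by Cauchy–Schwarz
`|⟨φ,ψ⟩|² ≤ (∑ |a_i|²) (∑ |b_i|² |c_i|²)`, and the first factor is at most `‖a‖²`.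
In the second, group the `i` by the configuration of the last `d - n` qubits at which `b` is
evaluated: the all-zero configuration collects every `i < n`, so its weight is
`∑_{i<n} |c_i|² ≤ T := ∑_{i<k-1} |c_i|²`, and any other configuration comes from a single `i`,
of weight `|c_i|² ≤ |c_0|² ≤ T`. Hence the second factor is at most `‖b‖² T`, and
`‖a‖² ‖b‖² = ‖φ‖² = 1`.
This is the bound of the overlap by the top eigenvalue of the reduced density matrix of `ψ`.
-/

open scoped BigOperators

/-- The `d`-qubit configuration `|2^{d-i}⟩` with a single `1` in position `i`. -/
def bitv (d : ℕ) (i : Fin d) : Fin d → Fin 2 := fun t => if t = i then 1 else 0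

/-- Coefficients of `ψ = ∑ᵢ cᵢ |i⟩ ⊗ |2^{d-i}⟩` on the product basis of
`ℂ^d ⊗ (ℂ²)^{⊗d}`. -/
noncomputable def psiC (d : ℕ) (c : Fin d → ℂ) : Fin d × (Fin d → Fin 2) → ℂ :=
  fun p => if p.2 = bitv d p.1 then c p.1 else 0

open Finset

theorem Fintype.sum_comp_le_sum_of_injective {ι κ M : Type*} [Fintype ι] [Fintype κ]
    [AddCommMonoid M] [PartialOrder M] [IsOrderedAddMonoid M]
    {g : ι → κ} (hg : Function.Injective g) {x : κ → M} (hx : 0 ≤ x) :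
    ∑ i, x (g i) ≤ ∑ j, x j := by
  classical
  rw [← sum_image hg.injOn]
  exact sum_le_sum_of_subset_of_nonneg (subset_univ _) fun j _ _ => hx j

theorem Fintype.sum_comp_mul_le_of_sum_fiber_le {ι κ R : Type*} [Fintype ι] [Fintype κ]
    [DecidableEq κ] [CommSemiring R] [PartialOrder R] [IsOrderedRing R]
    (g : ι → κ) {x : κ → R} (hx : 0 ≤ x) (y : ι → R) {M : R}
    (hM : ∀ j, ∑ i with g i = j, y i ≤ M) :
    ∑ i, x (g i) * y i ≤ (∑ j, x j) * M := by
  calc ∑ i, x (g i) * y i = ∑ j, x j * ∑ i with g i = j, y i := by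
        rw [← Finset.sum_fiberwise univ g]
        refine Finset.sum_congr rfl fun j _ => ?_
        rw [mul_sum]
        exact Finset.sum_congr rfl fun i hi => by rw [(mem_filter.1 hi).2]
    _ ≤ ∑ j, x j * M := sum_le_sum fun j _ => mul_le_mul_of_nonneg_left (hM j) (hx j)
    _ = (∑ j, x j) * M := (sum_mul ..).symm

theorem Fintype.sum_restrict_mul_restrict {ι X R : Type*} [Fintype ι] [DecidableEq ι] [Fintype X]
    [CommSemiring R] (p q : ι → Prop) [DecidablePred p] [DecidablePred q]
    (hpq : ∀ i, q i ↔ ¬ p i) (F : ({i // p i} → X) → R) (G : ({i // q i} → X) → R) :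
    ∑ f : ι → X, F (Subtype.restrict p f) * G (Subtype.restrict q f) =
      (∑ g, F g) * ∑ h, G h := by
  let e : (ι → X) ≃ ({i // p i} → X) × ({i // q i} → X) :=
    (Equiv.piEquivPiSubtypeProd p fun _ => X).trans
      (Equiv.prodCongr (Equiv.refl _)
        (Equiv.arrowCongr (Equiv.subtypeEquivRight fun i => (hpq i).symm) (Equiv.refl X)))
  rw [sum_mul_sum, ← Fintype.sum_prod_type', ← e.sum_comp]
  rfl

theorem sum_conj_mul_psiC (d : ℕ) (c : Fin d → ℂ) (φ : Fin d × (Fin d → Fin 2) → ℂ) :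
    ∑ p, starRingEnd ℂ (φ p) * psiC d c p = ∑ i, starRingEnd ℂ (φ (i, bitv d i)) * c i := by
  rw [Fintype.sum_prod_type]
  refine sum_congr rfl fun i _ => ?_
  simp only [psiC, mul_ite, mul_zero]
  exact Fintype.sum_ite_eq' _ _

theorem eq_of_restrict_bitv_eq {d : ℕ} (q : Fin d → Prop) {i j : Fin d} (hi : q i)
    (h : Subtype.restrict q (bitv d j) = Subtype.restrict q (bitv d i)) : j = i := by
  have := congrFun h ⟨i, hi⟩
  by_contra hne
  simp [bitv, Ne.symm hne] at this

theorem sum_fiber_restrict_bitv_le {d n : ℕ} {y : Fin d → ℝ} (hy : 0 ≤ y) {M : ℝ}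
    (hlow : ∑ i ∈ univ.filter fun i : Fin d => (i : ℕ) < n, y i ≤ M) (hle : ∀ i, y i ≤ M)
    (h : {x : Fin d // n ≤ (x : ℕ)} → Fin 2) :
    ∑ i with Subtype.restrict (fun x : Fin d => n ≤ (x : ℕ)) (bitv d i) = h, y i ≤ M := by
  by_cases hhigh : ∃ i₀ : Fin d,
      n ≤ (i₀ : ℕ) ∧ Subtype.restrict (fun x : Fin d => n ≤ (x : ℕ)) (bitv d i₀) = h
  · obtain ⟨i₀, hi₀, rfl⟩ := hhigh
    calc _ ≤ ∑ i ∈ {i₀}, y i :=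
          sum_le_sum_of_subset_of_nonneg
            (fun j hj => mem_singleton.2 (eq_of_restrict_bitv_eq _ hi₀ (mem_filter.1 hj).2))
            fun i _ _ => hy i
      _ ≤ M := by rw [sum_singleton]; exact hle i₀
  · refine le_trans (sum_le_sum_of_subset_of_nonneg (fun j hj => ?_) fun i _ _ => hy i) hlow
    rw [mem_filter] at hj ⊢
    exact ⟨mem_univ j, not_le.1 fun hj' => hhigh ⟨j, hj', hj.2⟩⟩

theorem stmt_13_general (d k n : ℕ) (hk : 2 ≤ k) (hn : n ≤ k - 1)
    (c : Fin d → ℂ)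
    (hsort : ∀ i j : Fin d, i ≤ j → ‖c j‖ ≤ ‖c i‖)
    (a : Fin d × ({x : Fin d // (x : ℕ) < n} → Fin 2) → ℂ)
    (b : ({x : Fin d // n ≤ (x : ℕ)} → Fin 2) → ℂ)
    (φ : Fin d × (Fin d → Fin 2) → ℂ)
    (hφ : ∀ (j : Fin d) (f : Fin d → Fin 2),
      φ (j, f) = a (j, fun t => f t.1) * b (fun t => f t.1))
    (hφnorm : ∑ p : Fin d × (Fin d → Fin 2), ‖φ p‖ ^ 2 = 1) :
    ‖∑ p : Fin d × (Fin d → Fin 2), (starRingEnd ℂ) (φ p) * psiC d c p‖ ^ 2 ≤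
      ∑ i ∈ Finset.univ.filter (fun i : Fin d => (i : ℕ) < k - 1), ‖c i‖ ^ 2 := by
  classical
  set T := ∑ i ∈ Finset.univ.filter (fun i : Fin d => (i : ℕ) < k - 1), ‖c i‖ ^ 2
  set rA := Subtype.restrict (fun x : Fin d => (x : ℕ) < n)
  set rB := Subtype.restrict (fun x : Fin d => n ≤ (x : ℕ))
  have hAB : (∑ q, ‖a q‖ ^ 2) * ∑ h, ‖b h‖ ^ 2 = 1 := by
    rw [← hφnorm, Fintype.sum_prod_type, Fintype.sum_prod_type, sum_mul]
    refine Finset.sum_congr rfl fun j _ => ?_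
    simp only [hφ, norm_mul, mul_pow]
    exact (Fintype.sum_restrict_mul_restrict _ _ (fun _ => not_lt.symm) _ _).symm
  have hA : ∑ i, ‖a (i, rA (bitv d i))‖ ^ 2 ≤ ∑ q, ‖a q‖ ^ 2 :=
    Fintype.sum_comp_le_sum_of_injective (g := fun i => (i, rA (bitv d i)))
      (x := fun q => ‖a q‖ ^ 2) (fun _ _ h => (Prod.ext_iff.1 h).1) fun q => sq_nonneg ‖a q‖
  have hB : ∑ i, ‖b (rB (bitv d i))‖ ^ 2 * ‖c i‖ ^ 2 ≤ (∑ h, ‖b h‖ ^ 2) * T := by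
    refine Fintype.sum_comp_mul_le_of_sum_fiber_le _ (fun h => sq_nonneg ‖b h‖) _
      (sum_fiber_restrict_bitv_le (fun i => sq_nonneg ‖c i‖) ?_ fun i => ?_)
    · refine sum_le_sum_of_subset_of_nonneg (fun i => ?_) fun i _ _ => sq_nonneg _
      simp only [mem_filter, mem_univ, true_and]
      omega
    · have hd : 0 < d := i.pos
      calc ‖c i‖ ^ 2 ≤ ‖c ⟨0, hd⟩‖ ^ 2 := by
            gcongr
            exact hsort _ _ (Fin.le_def.2 (Nat.zero_le _))
        _ ≤ T := single_le_sum (f := fun i => ‖c i‖ ^ 2) (fun i _ => sq_nonneg _)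
            (by simp only [mem_filter, mem_univ, true_and]; omega)
  calc _ = ‖∑ i, starRingEnd ℂ (a (i, rA (bitv d i))) *
        (starRingEnd ℂ (b (rB (bitv d i))) * c i)‖ ^ 2 := by
        rw [sum_conj_mul_psiC]; simp only [hφ, map_mul, mul_assoc]; rfl
    _ ≤ (∑ i, ‖a (i, rA (bitv d i))‖ * (‖b (rB (bitv d i))‖ * ‖c i‖)) ^ 2 := by
        gcongr
        exact (norm_sum_le _ _).trans_eq (by simp only [norm_mul, Complex.norm_conj])
    _ ≤ (∑ i, ‖a (i, rA (bitv d i))‖ ^ 2) * ∑ i, (‖b (rB (bitv d i))‖ * ‖c i‖) ^ 2 :=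
        sum_mul_sq_le_sq_mul_sq _ _ _
    _ ≤ (∑ q, ‖a q‖ ^ 2) * ((∑ h, ‖b h‖ ^ 2) * T) := by
        simp only [mul_pow]; gcongr
    _ = T := by rw [← mul_assoc, hAB, one_mul]

/-- If the unit vector `φ` is a product `φ_A ⊗ φ_B`, with `φ_A` on the qudit together
with the first `n` qubits (`n ≤ k-1`) and `φ_B` on the remaining `d-n` qubits, then
`|⟨φ,ψ⟩|² ≤ ∑_{i=1}^{k-1} |cᵢ|²` for `ψ = ∑ᵢ cᵢ|i⟩⊗|2^{d-i}⟩` with sorted coefficients. -/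
theorem stmt_13 (d k n : ℕ) (hk : 2 ≤ k) (hkd : k ≤ d) (hn : n ≤ k - 1)
    (c : Fin d → ℂ)
    (hsort : ∀ i j : Fin d, i ≤ j → ‖c j‖ ≤ ‖c i‖)
    (hnorm : ∑ i : Fin d, ‖c i‖ ^ 2 = 1)
    (a : Fin d × ({x : Fin d // (x : ℕ) < n} → Fin 2) → ℂ)
    (b : ({x : Fin d // n ≤ (x : ℕ)} → Fin 2) → ℂ)
    (φ : Fin d × (Fin d → Fin 2) → ℂ)
    (hφ : ∀ (j : Fin d) (f : Fin d → Fin 2),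
      φ (j, f) = a (j, fun t => f t.1) * b (fun t => f t.1))
    (hφnorm : ∑ p : Fin d × (Fin d → Fin 2), ‖φ p‖ ^ 2 = 1) :
    ‖∑ p : Fin d × (Fin d → Fin 2), (starRingEnd ℂ) (φ p) * psiC d c p‖ ^ 2 ≤
      ∑ i ∈ Finset.univ.filter (fun i : Fin d => (i : ℕ) < k - 1), ‖c i‖ ^ 2 :=
  stmt_13_general d k n hk hn c hsort a b φ hφ hφnorm
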